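/- arXiv:1512.07522 — 5 statements merged into one kernel-verified Lean document; each statement's English description precedes it below -/
import Mathlib

section
/- For every z ∈ [0,∞)^d, the vector x of recursive max-linear values on 𝒟 satisfies x_i = max_{j ∈ An(i)} b_{ji} z_j for every i ∈ V; that is, B is the max-linear coefficient matrix of the recursive max-linear model. -/
/-!
The proof is an induction along the DAG, which is well founded because it is acyclic.
The coefficients satisfy the tropical Bellman equation
`b j i = max_{k ∈ pa(i), j ∈ An(k)} b j k * c k i` for `j ∈ an(i)`: a max-weighted path from `j`
to `i` ends with an edge `k → i`, and its prefix weighs at most `b j k`. Substituting the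
induction hypothesis for the parents into the recursion
`x i = max (max_{k ∈ pa(i)} c k i * x k) (c i i * z i)` then yields `x i = max_j b j i * z j`.
-/

open scoped NNReal ENNReal Classical

namespace MaxLinearDAG

variable {d : ℕ}

/-- `p` is a directed path (with at least one edge) from `j` to `i` in the edge relation `E`. -/
def PathFrom (E : Fin d → Fin d → Prop) (j i : Fin d) (p : List (Fin d)) : Prop :=
  2 ≤ p.length ∧ p.head? = some j ∧ p.getLast? = some i ∧ List.Chain' E p

/-- The directed graph given by `E` is acyclic: no directed path from a node to itself. -/
def Acyclic (E : Fin d → Fin d → Prop) : Prop :=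
  ∀ i, ¬ ∃ p, PathFrom E i i p

/-- `j` is an ancestor of `i`: there is a path from `j` to `i`. -/
def anc (E : Fin d → Fin d → Prop) (j i : Fin d) : Prop :=
  ∃ p, PathFrom E j i p

/-- The weight of a path `p` starting at `j`: `c j j` times the product of the
edge weights along `p`. -/
noncomputable def pathWeight (c : Fin d → Fin d → ℝ≥0) (j : Fin d) (p : List (Fin d)) : ℝ≥0 :=
  c j j * ((p.zip p.tail).map fun q => c q.1 q.2).prod

/-- `b` is the max-linear coefficient matrix of the recursive ML model on `(E, c)`:
for `j ∈ an(i)`, `b j i` is the (attained) maximum of the path weights over all paths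
from `j` to `i`; `b i i = c i i`; and `b j i = 0` for `j ∉ An(i)`. -/
def IsMLMatrix (E : Fin d → Fin d → Prop) (c b : Fin d → Fin d → ℝ≥0) : Prop :=
  (∀ i, b i i = c i i) ∧
  (∀ j i, j ≠ i → ¬ anc E j i → b j i = 0) ∧
  (∀ j i p, PathFrom E j i p → pathWeight c j p ≤ b j i) ∧
  (∀ j i, anc E j i → ∃ p, PathFrom E j i p ∧ pathWeight c j p = b j i)

/-- `x` is the vector of recursive max-linear values on `(E, c)` for noise `z`:
`x i = max (max_{k ∈ pa(i)} c k i * x k) (c i i * z i)`, empty max being `0`. -/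
def IsRecML (E : Fin d → Fin d → Prop) (c : Fin d → Fin d → ℝ≥0) (z x : Fin d → ℝ≥0) : Prop :=
  ∀ i, x i = (Finset.univ.sup fun k => if E k i then c k i * x k else 0) ⊔ c i i * z i

/-- Max-times matrix product `F ⊙ G`. -/
noncomputable def mprod (F G : Fin d → Fin d → ℝ≥0) : Fin d → Fin d → ℝ≥0 :=
  fun i j => Finset.univ.sup fun k => F i k * G k j

/-- Max-times matrix power, `mpow A 0` being the identity matrix. -/
noncomputable def mpow (A : Fin d → Fin d → ℝ≥0) : ℕ → Fin d → Fin d → ℝ≥0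
  | 0 => fun i j => if i = j then 1 else 0
  | n + 1 => mprod (mpow A n) A

/-- `p` is a max-weighted path from `j` to `i`. -/
def MaxWeighted (E : Fin d → Fin d → Prop) (c b : Fin d → Fin d → ℝ≥0)
    (j i : Fin d) (p : List (Fin d)) : Prop :=
  PathFrom E j i p ∧ pathWeight c j p = b j i

/-- The lowest max-weighted ancestors of `i` in `U`: nodes `j ∈ An(i) ∩ U` such that no
max-weighted path from `j` to `i` passes through a node of `U \ {j}`. -/
def AnLow (E : Fin d → Fin d → Prop) (c b : Fin d → Fin d → ℝ≥0)
    (U : Set (Fin d)) (i : Fin d) : Set (Fin d) :=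
  {j | (anc E j i ∨ j = i) ∧ j ∈ U ∧
    ∀ p, MaxWeighted E c b j i p → ¬ ∃ u ∈ U \ {j}, u ∈ p}

/-- The highest max-weighted descendants of `i` in `U`: nodes `l ∈ De(i) ∩ U` such that no
max-weighted path from `i` to `l` passes through a node of `U \ {l}`. -/
def DeHigh (E : Fin d → Fin d → Prop) (c b : Fin d → Fin d → ℝ≥0)
    (U : Set (Fin d)) (i : Fin d) : Set (Fin d) :=
  {l | (anc E i l ∨ l = i) ∧ l ∈ U ∧
    ∀ p, MaxWeighted E c b i l p → ¬ ∃ u ∈ U \ {l}, u ∈ p}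

section Paths

variable {E : Fin d → Fin d → Prop}

lemma pathFrom_pair {j i : Fin d} (h : E j i) : PathFrom E j i [j, i] :=
  ⟨by simp, rfl, rfl, List.isChain_pair.mpr h⟩

lemma PathFrom.append {j k i : Fin d} {p q : List (Fin d)} (hp : PathFrom E j k p)
    (hq : PathFrom E k i (k :: q)) : PathFrom E j i (p ++ q) := by
  obtain ⟨hpl, hph, hpk, hpc⟩ := hp
  obtain ⟨hql, -, hqi, hqc⟩ := hq
  obtain ⟨a, q, rfl⟩ := List.exists_cons_of_ne_nil (by rintro rfl; simp at hql : q ≠ [])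
  obtain ⟨hka, hqc⟩ := List.isChain_cons_cons.mp hqc
  have hp0 : p ≠ [] := by rintro rfl; simp at hpl
  refine ⟨by simp; omega, by rwa [List.head?_append_of_ne_nil _ hp0], ?_, ?_⟩
  · rwa [List.getLast?_append_of_ne_nil _ (List.cons_ne_nil a q), ← List.getLast?_cons_cons]
  · refine hpc.append hqc ?_
    rintro k' hk' a' ⟨⟩
    rw [hpk, Option.mem_some_iff] at hk'
    exact hk' ▸ hka

lemma PathFrom.concat {j k i : Fin d} {p : List (Fin d)} (hp : PathFrom E j k p) (h : E k i) :
    PathFrom E j i (p ++ [i]) :=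
  hp.append (pathFrom_pair h)

lemma anc_trans {j k i : Fin d} : anc E j k → anc E k i → anc E j i := by
  rintro ⟨p, hp⟩ ⟨_ | ⟨a, q⟩, hq⟩
  · simp [PathFrom] at hq
  · obtain rfl : a = k := by simpa using hq.2.1
    exact ⟨_, hp.append hq⟩

lemma anc_of_edge {j k i : Fin d} (hjk : anc E j k ∨ j = k) (h : E k i) : anc E j i := by
  rcases hjk with ⟨p, hp⟩ | rfl
  exacts [⟨_, hp.concat h⟩, ⟨_, pathFrom_pair h⟩]

lemma PathFrom.exists_eq_concat {j i : Fin d} {p : List (Fin d)} (hp : PathFrom E j i p) :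
    ∃ k q, p = q ++ [i] ∧ q.getLast? = some k ∧ E k i ∧ (q = [j] ∨ PathFrom E j k q) := by
  obtain ⟨hl, hj, hi, hc⟩ := hp
  obtain ⟨q, rfl⟩ : ∃ q, p = q ++ [i] := ⟨_, (List.dropLast_append_getLast? i hi).symm⟩
  have hq0 : q ≠ [] := by rintro rfl; simp at hl
  obtain ⟨hqc, -, hki⟩ := List.isChain_append.mp hc
  rw [List.head?_append_of_ne_nil _ hq0] at hj
  have hk := List.getLast?_eq_some_getLast hq0
  refine ⟨_, q, rfl, hk, hki _ hk _ rfl, ?_⟩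
  rcases q with _ | ⟨a, _ | ⟨a', q⟩⟩
  · exact absurd rfl hq0
  · left; simpa using hj
  · right; exact ⟨by simp, hj, hk, hqc⟩

lemma _root_.List.prod_map_zip_tail_concat {α M : Type*} [Monoid M] (f : α × α → M) (i : α) :
    ∀ {l : List α} {k : α}, l.getLast? = some k →
      (((l ++ [i]).zip (l ++ [i]).tail).map f).prod = ((l.zip l.tail).map f).prod * f (k, i)
  | [], _, h => by simp at h
  | [a], _, h => by cases Option.some_inj.mp h; simp
  | a :: b :: l, k, h => by
      have ih := List.prod_map_zip_tail_concat f i (l := b :: l) (by simpa using h)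
      simp only [List.cons_append, List.tail_cons, List.zip_cons_cons, List.map_cons,
        List.prod_cons] at ih ⊢
      rw [ih, mul_assoc]

lemma pathWeight_concat (c : Fin d → Fin d → ℝ≥0) (j : Fin d) {p : List (Fin d)} {k : Fin d}
    (hk : p.getLast? = some k) (i : Fin d) :
    pathWeight c j (p ++ [i]) = pathWeight c j p * c k i := by
  rw [pathWeight, pathWeight, List.prod_map_zip_tail_concat _ i hk, mul_assoc]

lemma Acyclic.wellFounded (hE : Acyclic E) : WellFounded E := by
  have : IsTrans (Fin d) (anc E) := ⟨fun _ _ _ => anc_trans⟩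
  have : Std.Irrefl (anc E) := ⟨hE⟩
  exact Subrelation.wf (r := anc E) (fun h => ⟨_, pathFrom_pair h⟩)
    (Finite.wellFounded_of_trans_of_irrefl _)

end Paths

section MaxLinear

variable {E : Fin d → Fin d → Prop} {c b : Fin d → Fin d → ℝ≥0}

lemma IsMLMatrix.mul_le_of_edge (hb : IsMLMatrix E c b) {j k i : Fin d}
    (hjk : anc E j k ∨ j = k) (h : E k i) : b j k * c k i ≤ b j i := by
  rcases hjk with ⟨p, hp⟩ | rfl
  · obtain ⟨p, hp, hw⟩ := hb.2.2.2 j k ⟨p, hp⟩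
    simpa [pathWeight_concat c j hp.2.2.1, hw] using hb.2.2.1 j i _ (hp.concat h)
  · simpa [pathWeight, hb.1 j] using hb.2.2.1 j i _ (pathFrom_pair h)

lemma IsMLMatrix.exists_edge_le_mul (hb : IsMLMatrix E c b) {j i : Fin d} (hji : anc E j i) :
    ∃ k, (anc E j k ∨ j = k) ∧ E k i ∧ b j i ≤ b j k * c k i := by
  obtain ⟨p, hp, hw⟩ := hb.2.2.2 j i hji
  obtain ⟨k, q, rfl, hk, hki, rfl | hq⟩ := hp.exists_eq_concat
  · obtain rfl : j = k := by simpa using hk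
    refine ⟨j, Or.inr rfl, hki, ?_⟩
    simp [← hw, pathWeight, hb.1 j]
  · refine ⟨k, Or.inl ⟨q, hq⟩, hki, ?_⟩
    rw [← hw, pathWeight_concat c j hk]
    exact mul_le_mul_left (hb.2.2.1 j k q hq) _

variable {z x : Fin d → ℝ≥0}

lemma IsRecML.mul_le_of_edge (hx : IsRecML E c z x) {k i : Fin d} (h : E k i) :
    c k i * x k ≤ x i := by
  rw [hx i]
  exact le_sup_of_le_left (Finset.le_sup_of_le (Finset.mem_univ k) (by rw [if_pos h]))

lemma IsRecML.mul_noise_le (hx : IsRecML E c z x) (i : Fin d) : c i i * z i ≤ x i := by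
  rw [hx i]
  exact le_sup_right

noncomputable def maxLinear (E : Fin d → Fin d → Prop) (b : Fin d → Fin d → ℝ≥0)
    (z : Fin d → ℝ≥0) (i : Fin d) : ℝ≥0 :=
  Finset.univ.sup fun j => if anc E j i ∨ j = i then b j i * z j else 0

lemma mul_le_maxLinear {j i : Fin d} (hji : anc E j i ∨ j = i) :
    b j i * z j ≤ maxLinear E b z i :=
  Finset.le_sup_of_le (Finset.mem_univ j) (by rw [if_pos hji])

lemma IsRecML.le_maxLinear (hb : IsMLMatrix E c b) (hx : IsRecML E c z x) {i : Fin d}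
    (hpa : ∀ k, E k i → x k ≤ maxLinear E b z k) : x i ≤ maxLinear E b z i := by
  rw [hx i]
  refine sup_le (Finset.sup_le fun k _ => ?_) (hb.1 i ▸ mul_le_maxLinear (Or.inr rfl))
  split_ifs with hki
  · refine (mul_le_mul_right (hpa k hki) _).trans ?_
    rw [maxLinear, NNReal.mul_finset_sup]
    refine Finset.sup_le fun j _ => ?_
    split_ifs with hjk
    · calc c k i * (b j k * z j) = b j k * c k i * z j := by ring
        _ ≤ b j i * z j := mul_le_mul_left (hb.mul_le_of_edge hjk hki) _
        _ ≤ maxLinear E b z i := mul_le_maxLinear (Or.inl (anc_of_edge hjk hki))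
    · simp
  · exact zero_le

lemma IsRecML.maxLinear_le (hb : IsMLMatrix E c b) (hx : IsRecML E c z x) {i : Fin d}
    (hpa : ∀ k, E k i → maxLinear E b z k ≤ x k) : maxLinear E b z i ≤ x i := by
  refine Finset.sup_le fun j _ => ?_
  split_ifs with hji
  · rcases hji with hji | rfl
    · obtain ⟨k, hjk, hki, hle⟩ := hb.exists_edge_le_mul hji
      calc b j i * z j ≤ b j k * c k i * z j := mul_le_mul_left hle _
        _ = c k i * (b j k * z j) := by ring
        _ ≤ c k i * x k := mul_le_mul_right ((mul_le_maxLinear hjk).trans (hpa k hki)) _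
        _ ≤ x i := hx.mul_le_of_edge hki
    · rw [hb.1 j]
      exact hx.mul_noise_le j
  · exact zero_le

end MaxLinear

theorem stmt0_general {d : ℕ} (E : Fin d → Fin d → Prop) (hE : Acyclic E)
    (c : Fin d → Fin d → ℝ≥0)
    (b : Fin d → Fin d → ℝ≥0) (hb : IsMLMatrix E c b)
    (z x : Fin d → ℝ≥0) (hx : IsRecML E c z x) :
    ∀ i, x i = Finset.univ.sup fun j => if anc E j i ∨ j = i then b j i * z j else 0 := by
  intro i
  induction i using hE.wellFounded.induction with
  | _ i ih =>
    exact le_antisymm (hx.le_maxLinear hb fun k hk => (ih k hk).le)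
      (hx.maxLinear_le hb fun k hk => (ih k hk).ge)

/-- For every `z ∈ [0,∞)^d`, the vector `x` of recursive max-linear values on `𝒟`
satisfies `x i = max_{j ∈ An(i)} b j i * z j` for every `i ∈ V`; that is, `B` is the
max-linear coefficient matrix of the recursive max-linear model. -/
theorem stmt0 {d : ℕ} (hd : 1 ≤ d) (E : Fin d → Fin d → Prop) (hE : Acyclic E)
    (c : Fin d → Fin d → ℝ≥0) (hcd : ∀ i, 0 < c i i) (hce : ∀ k i, E k i → 0 < c k i)
    (b : Fin d → Fin d → ℝ≥0) (hb : IsMLMatrix E c b)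
    (z x : Fin d → ℝ≥0) (hx : IsRecML E c z x) :
    ∀ i, x i = Finset.univ.sup fun j => if anc E j i ∨ j = i then b j i * z j else 0 :=
  stmt0_general E hE c b hb z x hx
end MaxLinearDAG
end

section
/- Define A = diag(c_{11},…,c_{dd}), A_0 = (c_{ij}·1_{pa(j)}(i))_{d×d}, and A_1 = (c_{ii} c_{ij}·1_{pa(j)}(i))_{d×d}. Then the max-linear coefficient matrix B satisfies B = A if d = 1, and B = A ∨ ⋁_{k=0}^{d−2} (A_1 ⊙ A_0^{⊙k}) if d ≥ 2, where ∨ denotes the entrywise maximum of matrices. -/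
/-!
The `(x, j)` entry of the `n`-th max-times power of `A0` is the largest edge-weight product of a
walk with `n` edges from `x` to `j`, and `A1 ⊙ A0^k` is `A0^(k+1)` with row `i` scaled by
`c i i`, so its entries are the largest path weights over paths with `k + 1` edges. In a DAG on
`d` nodes every path is repetition-free and so has at most `d - 1` edges; hence the maximum over
`k ≤ d - 2` is exactly `b` off the diagonal, while on the diagonal it is dominated by
`b i i = c i i`.
-/

open scoped NNReal ENNReal Classical

namespace MaxLinearDAG

variable {d : ℕ}

noncomputable def weightedAdj (E : Fin d → Fin d → Prop) (c : Fin d → Fin d → ℝ≥0) :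
    Fin d → Fin d → ℝ≥0 :=
  fun i j => if E i j then c i j else 0

noncomputable def edgeWeight (c : Fin d → Fin d → ℝ≥0) (p : List (Fin d)) : ℝ≥0 :=
  ((p.zip p.tail).map fun q => c q.1 q.2).prod

lemma pathWeight_eq_mul_edgeWeight (c : Fin d → Fin d → ℝ≥0) (j : Fin d)
    (p : List (Fin d)) :
    pathWeight c j p = c j j * edgeWeight c p := rfl

@[simp] lemma edgeWeight_singleton (c : Fin d → Fin d → ℝ≥0) (x : Fin d) :
    edgeWeight c [x] = 1 := by
  simp [edgeWeight]

@[simp] lemma edgeWeight_cons_cons (c : Fin d → Fin d → ℝ≥0) (x y : Fin d)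
    (l : List (Fin d)) :
    edgeWeight c (x :: y :: l) = c x y * edgeWeight c (y :: l) := by
  simp [edgeWeight]

section MaxTimes

lemma mprod_assoc (X Y Z : Fin d → Fin d → ℝ≥0) :
    mprod (mprod X Y) Z = mprod X (mprod Y Z) := by
  funext i j
  simp only [mprod, NNReal.finset_sup_mul, NNReal.mul_finset_sup, mul_assoc]
  exact Finset.sup_comm _ _ _

lemma mprod_one_left (M : Fin d → Fin d → ℝ≥0) :
    mprod (fun i j => if i = j then 1 else 0) M = M := by
  funext i j
  refine le_antisymm (Finset.sup_le fun k _ => ?_) ?_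
  · by_cases h : i = k <;> simp [h]
  · simpa [mprod] using Finset.le_sup (f := fun k => (if i = k then (1 : ℝ≥0) else 0) * M k j)
      (Finset.mem_univ i)

lemma mprod_one_right (M : Fin d → Fin d → ℝ≥0) :
    mprod M (fun i j => if i = j then 1 else 0) = M := by
  funext i j
  refine le_antisymm (Finset.sup_le fun k _ => ?_) ?_
  · by_cases h : k = j <;> simp [h]
  · simpa [mprod] using Finset.le_sup (f := fun k => M i k * if k = j then (1 : ℝ≥0) else 0)
      (Finset.mem_univ j)

lemma mpow_succ' (M : Fin d → Fin d → ℝ≥0) (n : ℕ) :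
    mpow M (n + 1) = mprod M (mpow M n) := by
  induction n with
  | zero => exact (mprod_one_left M).trans (mprod_one_right M).symm
  | succ n ih =>
    change mprod (mpow M (n + 1)) M = _
    nth_rw 1 [ih]
    rw [mprod_assoc]
    rfl

lemma mprod_mul_row_apply (a : Fin d → ℝ≥0) (M N : Fin d → Fin d → ℝ≥0)
    (i j : Fin d) :
    mprod (fun i k => a i * M i k) N i j = a i * mprod M N i j := by
  simp only [mprod, NNReal.mul_finset_sup, mul_assoc]

end MaxTimes

section Walks

variable {E : Fin d → Fin d → Prop}

lemma PathFrom.exists_eq_cons {j i : Fin d} {p : List (Fin d)} (hp : PathFrom E j i p) :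
    ∃ l, p = j :: l := by
  obtain ⟨-, hhead, -⟩ := hp
  cases p with
  | nil => simp at hhead
  | cons x l => exact ⟨l, by simpa using hhead⟩

lemma pathFrom_cons {j i : Fin d} {l : List (Fin d)} (hl : l ≠ []) (hc : List.IsChain E (j :: l))
    (hlast : (j :: l).getLast? = some i) : PathFrom E j i (j :: l) :=
  ⟨by simpa [Nat.one_le_iff_ne_zero] using hl, rfl, hlast, hc⟩

lemma anc_of_isChain_cons {x y : Fin d} {l : List (Fin d)} (hc : List.IsChain E (x :: l))
    (hy : y ∈ l) : anc E x y := by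
  obtain ⟨l₁, l₂, rfl⟩ := List.append_of_mem hy
  refine ⟨x :: (l₁ ++ [y]), pathFrom_cons (by simp) ?_ ?_⟩
  · exact List.IsChain.left_of_append (l₂ := l₂) (by simpa using hc)
  · rw [← List.cons_append, List.getLast?_concat]

lemma Acyclic.nodup_of_isChain (hE : Acyclic E) {p : List (Fin d)} (hc : List.IsChain E p) :
    p.Nodup := by
  induction p with
  | nil => exact List.nodup_nil
  | cons x l ih =>
    exact List.nodup_cons.mpr ⟨fun hx => hE x (anc_of_isChain_cons hc hx), ih hc.tail⟩

lemma Acyclic.length_le (hE : Acyclic E) {j i : Fin d} {p : List (Fin d)}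
    (hp : PathFrom E j i p) : p.length ≤ d := by
  simpa using (hE.nodup_of_isChain hp.2.2.2).length_le_card

variable (c : Fin d → Fin d → ℝ≥0)

lemma edgeWeight_le_mpow {x j : Fin d} {l : List (Fin d)} (hc : List.IsChain E (x :: l))
    (hlast : (x :: l).getLast? = some j) :
    edgeWeight c (x :: l) ≤ mpow (weightedAdj E c) l.length x j := by
  induction l generalizing x with
  | nil =>
    obtain rfl : x = j := by simpa using hlast
    simp [mpow]
  | cons y l ih =>
    rw [List.isChain_cons_cons] at hc
    rw [edgeWeight_cons_cons, List.length_cons, mpow_succ']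
    calc c x y * edgeWeight c (y :: l)
        ≤ weightedAdj E c x y * mpow (weightedAdj E c) l.length y j := by
          rw [weightedAdj, if_pos hc.1]
          exact mul_le_mul_right (ih hc.2 (by simpa using hlast)) _
      _ ≤ _ := Finset.le_sup (f := fun k => weightedAdj E c x k *
            mpow (weightedAdj E c) l.length k j) (Finset.mem_univ y)

lemma exists_isChain_edgeWeight_eq_mpow {n : ℕ} {x j : Fin d}
    (h : mpow (weightedAdj E c) n x j ≠ 0) :
    ∃ l : List (Fin d), l.length = n ∧ List.IsChain E (x :: l) ∧
      (x :: l).getLast? = some j ∧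
      edgeWeight c (x :: l) = mpow (weightedAdj E c) n x j := by
  induction n generalizing x with
  | zero =>
    obtain rfl : x = j := by
      by_contra hne
      exact h (by simp [mpow, hne])
    exact ⟨[], rfl, List.isChain_singleton x, rfl, by simp [mpow]⟩
  | succ n ih =>
    rw [mpow_succ'] at h ⊢
    obtain ⟨y, -, hy⟩ := Finset.exists_mem_eq_sup Finset.univ ⟨x, Finset.mem_univ x⟩
      (fun k => weightedAdj E c x k * mpow (weightedAdj E c) n k j)
    rw [mprod, hy] at h ⊢
    obtain ⟨hxy, hyj⟩ := mul_ne_zero_iff.mp h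
    have hExy : E x y := by
      by_contra hne
      exact hxy (if_neg hne)
    obtain ⟨l, hlen, hc, hlast, hw⟩ := ih hyj
    refine ⟨y :: l, by simp [hlen], List.isChain_cons_cons.mpr ⟨hExy, hc⟩,
      by simpa using hlast, ?_⟩
    rw [edgeWeight_cons_cons, hw, weightedAdj, if_pos hExy]

end Walks

namespace IsMLMatrix

variable {E : Fin d → Fin d → Prop} {c b : Fin d → Fin d → ℝ≥0}

lemma mul_mpow_le (hb : IsMLMatrix E c b) (n : ℕ) (i j : Fin d) :
    c i i * mpow (weightedAdj E c) (n + 1) i j ≤ b i j := by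
  by_cases h0 : mpow (weightedAdj E c) (n + 1) i j = 0
  · rw [h0, mul_zero]
    exact zero_le
  obtain ⟨l, hlen, hc, hlast, hw⟩ := exists_isChain_edgeWeight_eq_mpow c h0
  rw [← hw, ← pathWeight_eq_mul_edgeWeight]
  exact hb.2.2.1 i j _ (pathFrom_cons (List.ne_nil_of_length_eq_add_one hlen) hc hlast)

lemma le_sup_mul_mpow (hb : IsMLMatrix E c b) (hE : Acyclic E) (i j : Fin d) (hij : i ≠ j) :
    b i j ≤ (Finset.range (d - 1)).sup fun k =>
      c i i * mpow (weightedAdj E c) (k + 1) i j := by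
  by_cases hanc : anc E i j
  swap
  · rw [hb.2.1 i j hij hanc]
    exact zero_le
  obtain ⟨p, hp, hw⟩ := hb.2.2.2 i j hanc
  have hlen := hE.length_le hp
  obtain ⟨l, rfl⟩ := hp.exists_eq_cons
  have hl : l ≠ [] := by simpa [Nat.one_le_iff_ne_zero] using hp.1
  obtain ⟨k, hk⟩ : ∃ k, l.length = k + 1 :=
    Nat.exists_eq_add_one.mpr (List.length_pos_iff.mpr hl)
  have hkd : k ∈ Finset.range (d - 1) := by
    simp only [List.length_cons] at hlen
    simp only [Finset.mem_range]
    omega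
  refine le_trans ?_ (Finset.le_sup (f := fun k =>
    c i i * mpow (weightedAdj E c) (k + 1) i j) hkd)
  rw [← hw, pathWeight_eq_mul_edgeWeight, ← hk]
  exact mul_le_mul_right (edgeWeight_le_mpow c hp.2.2.2 hp.2.2.1) _

end IsMLMatrix

theorem stmt1_general {d : ℕ} (E : Fin d → Fin d → Prop) (hE : Acyclic E)
    (c : Fin d → Fin d → ℝ≥0)
    (b : Fin d → Fin d → ℝ≥0) (hb : IsMLMatrix E c b) :
    let A : Fin d → Fin d → ℝ≥0 := fun i j => if i = j then c i i else 0
    let A0 : Fin d → Fin d → ℝ≥0 := fun i j => if E i j then c i j else 0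
    let A1 : Fin d → Fin d → ℝ≥0 := fun i j => if E i j then c i i * c i j else 0
    (d = 1 → ∀ i j, b i j = A i j) ∧
    (2 ≤ d → ∀ i j, b i j =
      A i j ⊔ (Finset.range (d - 1)).sup fun k => mprod A1 (mpow A0 k) i j) := by
  intro A A0 A1
  have hA0 : A0 = weightedAdj E c := rfl
  have hA1 : A1 = fun i k => c i i * weightedAdj E c i k := by
    funext i k
    simp only [A1, weightedAdj, mul_ite, mul_zero]
  have hterm (k : ℕ) (i j : Fin d) :
      mprod A1 (mpow A0 k) i j = c i i * mpow (weightedAdj E c) (k + 1) i j := by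
    rw [hA0, hA1, mprod_mul_row_apply, mpow_succ']
  refine ⟨fun hd i j => ?_, fun _ i j => ?_⟩
  · subst hd
    obtain rfl := Subsingleton.elim i j
    simp [A, hb.1]
  simp only [hterm]
  rcases eq_or_ne i j with rfl | hij
  · simp only [A, if_pos rfl, hb.1]
    exact left_eq_sup.mpr (Finset.sup_le fun k _ => hb.1 i ▸ hb.mul_mpow_le k i i)
  · simp only [A, if_neg hij]
    exact le_antisymm (le_sup_of_le_right (hb.le_sup_mul_mpow hE i j hij))
      (sup_le zero_le (Finset.sup_le fun k _ => hb.mul_mpow_le k i j))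

/-- With `A = diag(c 1 1, …, c d d)`, `A0 = (c i j • 1_{pa(j)}(i))` and
`A1 = (c i i * c i j • 1_{pa(j)}(i))`, the ML coefficient matrix `B` satisfies `B = A` if
`d = 1`, and `B = A ∨ ⋁_{k=0}^{d-2} (A1 ⊙ A0^{⊙k})` if `d ≥ 2`. -/
theorem stmt1 {d : ℕ} (hd : 1 ≤ d) (E : Fin d → Fin d → Prop) (hE : Acyclic E)
    (c : Fin d → Fin d → ℝ≥0) (hcd : ∀ i, 0 < c i i) (hce : ∀ k i, E k i → 0 < c k i)
    (b : Fin d → Fin d → ℝ≥0) (hb : IsMLMatrix E c b) :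
    let A : Fin d → Fin d → ℝ≥0 := fun i j => if i = j then c i i else 0
    let A0 : Fin d → Fin d → ℝ≥0 := fun i j => if E i j then c i j else 0
    let A1 : Fin d → Fin d → ℝ≥0 := fun i j => if E i j then c i i * c i j else 0
    (d = 1 → ∀ i j, b i j = A i j) ∧
    (2 ≤ d → ∀ i j, b i j =
      A i j ⊔ (Finset.range (d - 1)).sup fun k => mprod A1 (mpow A0 k) i j) :=
  stmt1_general E hE c b hb
end MaxLinearDAG
end

section
/- Let U ⊆ V, i ∈ V, and j ∈ an(i) (so b_{ji} > 0). (a) There is a max-weighted path from j to i that passes through some node in U if and only if b_{ji} = max_{k ∈ De(j)∩U∩An(i)} b_{jk} b_{ki} / b_{kk}. (b) No max-weighted path from j to i passes through some node in U if and only if b_{ji} > max_{k ∈ De(j)∩U∩An(i)} b_{jk} b_{ki} / b_{kk}, where the maximum over the empty set is 0 (so (b) also covers U = ∅). -/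
open scoped NNReal ENNReal Classical

namespace MaxLinearDAG

variable {d : ℕ}

/-! Concatenating max-weighted paths `j ⇝ k` and `k ⇝ i` gives a path `j ⇝ i` whose weight
times `c k k` is `b j k * b k i`, so every term `b j k * b k i / b k k` of the maximum is at most
`b j i`. Conversely, splitting a max-weighted path `j ⇝ i` at a node `k` shows that the term of
`k` equals `b j i`. So `b j i` is attained by a term with `k ∈ U` exactly when some max-weighted
path passes through `U`, and (b) is the negation of (a). -/

lemma le_ite_div_iff {P : Prop} [Decidable P] {a x y : ℝ≥0} (ha : 0 < a) (hy : 0 < y) :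
    a ≤ (if P then x / y else 0) ↔ P ∧ a * y ≤ x := by
  split_ifs with hP
  · simp [hP, le_div_iff₀ hy]
  · simp [hP, ha.ne']

lemma zip_tail_append_of_getLast? {α : Type*} {p : List α} {k : α} (hp : p.getLast? = some k)
    (t : List α) : (p ++ t).zip (p ++ t).tail = p.zip p.tail ++ (k :: t).zip t := by
  induction p with
  | nil => simp at hp
  | cons a q ih =>
    cases q with
    | nil => simp_all
    | cons x s => simpa using ih (by simpa using hp)

lemma rel_of_mem_zip_tail {α : Type*} {R : α → α → Prop} {p : List α} (h : p.IsChain R)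
    {q : α × α} (hq : q ∈ p.zip p.tail) : R q.1 q.2 := by
  induction p with
  | nil => simp at hq
  | cons a s ih =>
    cases s with
    | nil => simp at hq
    | cons x s =>
      rw [List.isChain_cons_cons] at h
      rcases List.mem_cons.mp hq with rfl | hq
      · exact h.1
      · exact ih h.2 hq

section

variable {E : Fin d → Fin d → Prop} {c b : Fin d → Fin d → ℝ≥0}

lemma pathWeight_append_mul {j k : Fin d} {p : List (Fin d)} (hp : p.getLast? = some k)
    (t : List (Fin d)) :
    pathWeight c j (p ++ t) * c k k = pathWeight c j p * pathWeight c k (k :: t) := by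
  simp only [pathWeight, zip_tail_append_of_getLast? hp, List.map_append, List.prod_append,
    List.tail_cons]
  ring

lemma pathFrom_iff {j i : Fin d} {p : List (Fin d)} : PathFrom E j i p ↔
    2 ≤ p.length ∧ p.head? = some j ∧ p.getLast? = some i ∧ p.IsChain E :=
  Iff.rfl

namespace PathFrom

variable {j k i : Fin d} {p q : List (Fin d)}

lemma head_mem (hp : PathFrom E j i p) : j ∈ p :=
  List.mem_of_mem_head? hp.2.1

lemma last_mem (hp : PathFrom E j i p) : i ∈ p :=
  List.mem_of_mem_getLast? hp.2.2.1

lemma pathWeight_pos (hcd : ∀ i, 0 < c i i) (hce : ∀ k i, E k i → 0 < c k i)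
    (hp : PathFrom E j i p) : 0 < pathWeight c j p :=
  mul_pos (hcd j) <| List.prod_pos fun _ ha => by
    obtain ⟨q, hq, rfl⟩ := List.mem_map.mp ha
    exact hce _ _ (rel_of_mem_zip_tail (pathFrom_iff.1 hp).2.2.2 hq)

lemma append_cons_iff {s t : List (Fin d)} (hs : s ≠ []) (ht : t ≠ []) :
    PathFrom E j i (s ++ k :: t) ↔ PathFrom E j k (s ++ [k]) ∧ PathFrom E k i (k :: t) := by
  have hs' := List.length_pos_iff.mpr hs
  have ht' := List.length_pos_iff.mpr ht
  rw [pathFrom_iff, pathFrom_iff, pathFrom_iff, List.isChain_split]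
  simp only [List.length_append, List.length_cons, List.head?_append_of_ne_nil _ hs,
    List.head?_cons, List.getLast?_append_of_ne_nil _ (List.cons_ne_nil k t),
    List.getLast?_concat]
  grind

lemma exists_eq_append_singleton (hp : PathFrom E j k p) : ∃ s ≠ [], p = s ++ [k] := by
  refine ⟨p.dropLast, List.ne_nil_of_length_pos ?_,
    (List.dropLast_append_getLast? k hp.2.2.1).symm⟩
  rw [List.length_dropLast]
  have := hp.1
  omega

lemma exists_eq_cons_s3 (hq : PathFrom E k i q) : ∃ t ≠ [], q = k :: t := by
  obtain ⟨hl, hh, -⟩ := hq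
  match q, hl with
  | a :: b :: t, _ => exact ⟨b :: t, List.cons_ne_nil b t, by simpa using hh⟩

lemma append_tail (hp : PathFrom E j k p) (hq : PathFrom E k i q) :
    PathFrom E j i (p ++ q.tail) := by
  obtain ⟨s, hs, rfl⟩ := hp.exists_eq_append_singleton
  obtain ⟨t, ht, rfl⟩ := hq.exists_eq_cons_s3
  simpa using (append_cons_iff hs ht).2 ⟨hp, hq⟩

lemma pathWeight_append_tail (hp : PathFrom E j k p) (hq : PathFrom E k i q) :
    pathWeight c j (p ++ q.tail) * c k k = pathWeight c j p * pathWeight c k q := by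
  obtain ⟨t, -, rfl⟩ := hq.exists_eq_cons_s3
  exact pathWeight_append_mul hp.2.2.1 t

lemma exists_split (hp : PathFrom E j i p) (hk : k ∈ p) (hkj : k ≠ j) (hki : k ≠ i) :
    ∃ p₁ p₂, PathFrom E j k p₁ ∧ PathFrom E k i p₂ ∧ p = p₁ ++ p₂.tail := by
  obtain ⟨s, t, rfl⟩ := List.append_of_mem hk
  have hs : s ≠ [] := by
    rintro rfl
    exact hkj (by simpa using hp.2.1)
  have ht : t ≠ [] := by
    rintro rfl
    exact hki (by simpa using hp.2.2.1)
  exact ⟨_, _, ((append_cons_iff hs ht).1 hp).1, ((append_cons_iff hs ht).1 hp).2, by simp⟩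

end PathFrom

namespace IsMLMatrix

variable {j k i : Fin d}

lemma mul_le_mul_diag (hb : IsMLMatrix E c b) (hjk : anc E j k ∨ k = j)
    (hki : anc E k i ∨ k = i) : b j k * b k i ≤ b j i * b k k := by
  obtain ⟨hbd, -, hble, hbex⟩ := hb
  rcases hjk with hjk | rfl
  · rcases hki with hki | rfl
    · obtain ⟨p, hp, hwp⟩ := hbex j k hjk
      obtain ⟨q, hq, hwq⟩ := hbex k i hki
      calc b j k * b k i = pathWeight c j (p ++ q.tail) * c k k := by
            rw [hp.pathWeight_append_tail hq, hwp, hwq]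
        _ ≤ b j i * b k k := by
            rw [hbd]
            exact mul_le_mul_left (hble _ _ _ (hp.append_tail hq)) _
    · exact le_rfl
  · exact (mul_comm _ _).le

/-- With `mul_le_mul_diag`: some max-weighted path passes through `k` iff that bound is an
equality. -/
lemma exists_maxWeighted_mem_iff (hb : IsMLMatrix E c b) (hcd : ∀ i, 0 < c i i)
    (hj : anc E j i) :
    (∃ p, MaxWeighted E c b j i p ∧ k ∈ p) ↔
      (anc E j k ∨ k = j) ∧ (anc E k i ∨ k = i) ∧ b j i * b k k ≤ b j k * b k i := by
  obtain ⟨hbd, -, hble, hbex⟩ := hb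
  obtain ⟨p₀, hp₀, hw₀⟩ := hbex j i hj
  constructor
  · rintro ⟨p, ⟨hp, hwp⟩, hkp⟩
    by_cases hkj : k = j
    · subst hkj
      exact ⟨Or.inr rfl, Or.inl hj, (mul_comm _ _).le⟩
    by_cases hki : k = i
    · subst hki
      exact ⟨Or.inl hj, Or.inr rfl, le_rfl⟩
    obtain ⟨p₁, p₂, hp₁, hp₂, rfl⟩ := hp.exists_split hkp hkj hki
    refine ⟨Or.inl ⟨p₁, hp₁⟩, Or.inl ⟨p₂, hp₂⟩, ?_⟩
    calc b j i * b k k = pathWeight c j p₁ * pathWeight c k p₂ := by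
          rw [← hwp, hbd, hp₁.pathWeight_append_tail hp₂]
      _ ≤ b j k * b k i := mul_le_mul' (hble _ _ _ hp₁) (hble _ _ _ hp₂)
  · rintro ⟨hjk | rfl, hki | rfl, hle⟩
    · obtain ⟨p, hp, hwp⟩ := hbex j k hjk
      obtain ⟨q, hq, hwq⟩ := hbex k i hki
      have hr := hp.append_tail hq
      refine ⟨p ++ q.tail, ⟨hr, le_antisymm (hble _ _ _ hr) ?_⟩, List.mem_append_left _ hp.last_mem⟩
      refine le_of_mul_le_mul_right ?_ (hcd k)
      rw [hp.pathWeight_append_tail hq, hwp, hwq, ← hbd]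
      exact hle
    · exact ⟨p₀, ⟨hp₀, hw₀⟩, hp₀.last_mem⟩
    · exact ⟨p₀, ⟨hp₀, hw₀⟩, hp₀.head_mem⟩
    · exact ⟨p₀, ⟨hp₀, hw₀⟩, hp₀.head_mem⟩

end IsMLMatrix

end

theorem stmt3_general {d : ℕ} (E : Fin d → Fin d → Prop)
    (c : Fin d → Fin d → ℝ≥0) (hcd : ∀ i, 0 < c i i) (hce : ∀ k i, E k i → 0 < c k i)
    (b : Fin d → Fin d → ℝ≥0) (hb : IsMLMatrix E c b)
    (U : Set (Fin d)) (i j : Fin d) (hj : anc E j i) :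
    ((∃ p, MaxWeighted E c b j i p ∧ ∃ u ∈ U, u ∈ p) ↔
      b j i = Finset.univ.sup fun k =>
        if (anc E j k ∨ k = j) ∧ k ∈ U ∧ (anc E k i ∨ k = i)
        then b j k * b k i / b k k else 0) ∧
    ((∀ p, MaxWeighted E c b j i p → ¬ ∃ u ∈ U, u ∈ p) ↔
      (Finset.univ.sup fun k =>
        if (anc E j k ∨ k = j) ∧ k ∈ U ∧ (anc E k i ∨ k = i)
        then b j k * b k i / b k k else 0) < b j i) := by
  set S := Finset.univ.sup fun k =>
    if (anc E j k ∨ k = j) ∧ k ∈ U ∧ (anc E k i ∨ k = i) then b j k * b k i / b k k else 0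
  have hbkk : ∀ k, 0 < b k k := fun k => hb.1 k ▸ hcd k
  obtain ⟨p₀, hp₀, hw₀⟩ := hb.2.2.2 j i hj
  have hbji : 0 < b j i := hw₀ ▸ hp₀.pathWeight_pos hcd hce
  have hS_le : S ≤ b j i := Finset.sup_le fun k _ => by
    split_ifs with hk
    · exact div_le_of_le_mul₀ zero_le zero_le (hb.mul_le_mul_diag hk.1 hk.2.2)
    · exact zero_le
  have hle_S : (∃ p, MaxWeighted E c b j i p ∧ ∃ u ∈ U, u ∈ p) ↔ b j i ≤ S := by
    simp only [S, Finset.le_sup_iff hbji, Finset.mem_univ, true_and,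
      le_ite_div_iff hbji (hbkk _)]
    constructor
    · rintro ⟨p, hp, k, hkU, hkp⟩
      obtain ⟨hjk, hki, hle⟩ := (hb.exists_maxWeighted_mem_iff hcd hj).1 ⟨p, hp, hkp⟩
      exact ⟨k, ⟨hjk, hkU, hki⟩, hle⟩
    · rintro ⟨k, ⟨hjk, hkU, hki⟩, hle⟩
      obtain ⟨p, hp, hkp⟩ := (hb.exists_maxWeighted_mem_iff hcd hj).2 ⟨hjk, hki, hle⟩
      exact ⟨p, hp, k, hkU, hkp⟩
  refine ⟨hle_S.trans ⟨fun h => le_antisymm h hS_le, fun h => h.le⟩, ?_⟩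
  rw [← not_le, ← hle_S]
  simp only [not_exists, not_and]

/-- Let `U ⊆ V`, `i ∈ V`, `j ∈ an(i)`.
(a) There is a max-weighted path from `j` to `i` passing through some node in `U` iff
`b j i = max_{k ∈ De(j) ∩ U ∩ An(i)} b j k * b k i / b k k`.
(b) No max-weighted path from `j` to `i` passes through some node in `U` iff
`b j i > max_{k ∈ De(j) ∩ U ∩ An(i)} b j k * b k i / b k k` (empty max being `0`,
which also covers `U = ∅`). -/
theorem stmt3 {d : ℕ} (hd : 1 ≤ d) (E : Fin d → Fin d → Prop) (hE : Acyclic E)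
    (c : Fin d → Fin d → ℝ≥0) (hcd : ∀ i, 0 < c i i) (hce : ∀ k i, E k i → 0 < c k i)
    (b : Fin d → Fin d → ℝ≥0) (hb : IsMLMatrix E c b)
    (U : Set (Fin d)) (i j : Fin d) (hj : anc E j i) :
    ((∃ p, MaxWeighted E c b j i p ∧ ∃ u ∈ U, u ∈ p) ↔
      b j i = Finset.univ.sup fun k =>
        if (anc E j k ∨ k = j) ∧ k ∈ U ∧ (anc E k i ∨ k = i)
        then b j k * b k i / b k k else 0) ∧
    ((∀ p, MaxWeighted E c b j i p → ¬ ∃ u ∈ U, u ∈ p) ↔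
      (Finset.univ.sup fun k =>
        if (anc E j k ∨ k = j) ∧ k ∈ U ∧ (anc E k i ∨ k = i)
        then b j k * b k i / b k k else 0) < b j i) :=
  stmt3_general E c hcd hce b hb U i j hj
end MaxLinearDAG
end

section
/- For every z ∈ [0,∞)^d with recursive max-linear values x on 𝒟, and for all i ∈ V and j ∈ An(i), one has (b_{ji}/b_{jj}) x_j ≤ x_i. -/
open scoped NNReal ENNReal Classical

namespace MaxLinearDAG

variable {d : ℕ}

/-- For every `z ∈ [0,∞)^d` with recursive max-linear values `x` on `𝒟`, and
for all `i ∈ V` and `j ∈ An(i)`, one has `(b j i / b j j) * x j ≤ x i`. -/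
theorem stmt5 {d : ℕ} (hd : 1 ≤ d) (E : Fin d → Fin d → Prop) (hE : Acyclic E)
    (c : Fin d → Fin d → ℝ≥0) (hcd : ∀ i, 0 < c i i) (hce : ∀ k i, E k i → 0 < c k i)
    (b : Fin d → Fin d → ℝ≥0) (hb : IsMLMatrix E c b)
    (z x : Fin d → ℝ≥0) (hx : IsRecML E c z x) :
    ∀ i j, (anc E j i ∨ j = i) → (b j i / b j j) * x j ≤ x i := by
  obtain ⟨hbd, _, _, hbmax⟩ := hb
  have edge : ∀ k i, E k i → c k i * x k ≤ x i := by
    intro k i hki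
    rw [hx i]
    refine le_sup_of_le_left ?_
    have h := Finset.le_sup (f := fun k' => if E k' i then c k' i * x k' else 0)
      (Finset.mem_univ k)
    simpa [hki] using h
  have key : ∀ p j i, PathFrom E j i p →
      ((p.zip p.tail).map fun q => c q.1 q.2).prod * x j ≤ x i := by
    intro p
    induction p with
    | nil => intro j i h; simp [PathFrom] at h
    | cons a rest ih =>
      intro j i h
      obtain ⟨hlen, hhead, hlast, hchain⟩ := h
      have haj : a = j := by simpa using hhead
      subst haj
      match rest, hlen, hlast, hchain, ih with
      | [k], _, hlast, hchain, _ =>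
        have hik : k = i := by simpa using hlast
        subst hik
        have hEak : E a k := (List.isChain_cons_cons.mp hchain).1
        simpa [mul_comm] using edge a k hEak
      | k :: r :: rs, _, hlast, hchain, ih =>
        obtain ⟨hEak, hch⟩ := List.isChain_cons_cons.mp hchain
        have hpath : PathFrom E k i (k :: r :: rs) := by
          refine ⟨by simp, rfl, ?_, hch⟩
          simpa [List.getLast?_cons_cons] using hlast
        have h1 := ih k i hpath
        have h2 : c a k * x a ≤ x k := edge a k hEak
        calc ((( a :: k :: r :: rs).zip (a :: k :: r :: rs).tail).map
              fun q => c q.1 q.2).prod * x a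
            = (((k :: r :: rs).zip (k :: r :: rs).tail).map
              fun q => c q.1 q.2).prod * (c a k * x a) := by
              simp [List.zip, mul_assoc, mul_comm, mul_left_comm]
          _ ≤ (((k :: r :: rs).zip (k :: r :: rs).tail).map
              fun q => c q.1 q.2).prod * x k := by
              exact mul_le_mul_right h2 _
          _ ≤ x i := h1
  intro i j hji
  rcases hji with hanc | rfl
  · obtain ⟨p, hp, hpw⟩ := hbmax j i hanc
    have h := key p j i hp
    rw [← hpw, hbd j, pathWeight,
      mul_div_cancel_left₀ _ (hcd j).ne']
    exact h
  · rw [hbd j, div_self (hcd j).ne', one_mul]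
end MaxLinearDAG
end

section
/- The edge set E^B of the minimum max-linear DAG 𝒟^B satisfies E^B = {(k,i) ∈ V×V : k ≠ i and b_{ki} > max_{l ∈ V, l ≠ i, l ≠ k} b_{kl} b_{li} / b_{ll}}; in particular, 𝒟^B is identifiable from the max-linear coefficient matrix B alone, without knowledge of 𝒟. -/
open scoped NNReal ENNReal Classical

namespace MaxLinearDAG

variable {d : ℕ}

/-!
If `(k,i) ∈ E^B` and `l ∉ {k,i}`, then `b_kl b_li / b_ll` (when nonzero) is the weight of a path
`k ⇝ l ⇝ i`. Its last edge enters `i` from some `l' ∈ de(k) ∩ pa(i)`, and absorbing everything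
before that edge into `b_kl'` bounds it by `b_kl' c_l'i ≤ b_kl' b_l'i / b_l'l' < b_ki`.
Conversely, if `b_ki` beats every factor through `l ∉ {k,i}`, a max-weighted path from `k` to `i`
has no intermediate node `m`, since its weight would be at most `b_km b_mi / b_mm`; so it is the
edge `k → i`. The remaining conditions match because in a DAG `de(k) ∩ pa(i)` avoids `k` and `i`.
-/

section Paths

variable {E : Fin d → Fin d → Prop} {j l m i : Fin d} {p : List (Fin d)}

theorem PathFrom.pair (h : E j i) : PathFrom E j i [j, i] :=
  ⟨by simp, by simp, by simp, List.isChain_pair.mpr h⟩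

theorem PathFrom.snoc (hp : PathFrom E j l p) (h : E l m) : PathFrom E j m (p ++ [m]) := by
  obtain ⟨hlen, hhead, hlast, hchain⟩ := hp
  refine ⟨by simp; omega, ?_, by simp, ?_⟩
  · rcases p with _ | ⟨a, t⟩
    · simp at hlen
    · simpa using hhead
  · refine hchain.append (by simp) fun x hx y hy => ?_
    rw [hlast, Option.mem_some_iff] at hx
    simp only [List.head?_cons, Option.mem_some_iff] at hy
    exact hx ▸ hy ▸ h

theorem PathFrom.exists_cons (hp : PathFrom E j i p) :
    ∃ m t, p = j :: m :: t ∧ E j m ∧ (t = [] ∧ m = i ∨ PathFrom E m i (m :: t)) := by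
  obtain ⟨hlen, hhead, hlast, hchain⟩ := hp
  rcases p with _ | ⟨a, _ | ⟨m, t⟩⟩
  · simp at hlen
  · simp at hlen
  obtain rfl : a = j := by simpa using hhead
  obtain ⟨hjm, hchain⟩ := List.isChain_cons_cons.mp hchain
  refine ⟨m, t, rfl, hjm, ?_⟩
  rcases t with _ | ⟨r, t⟩
  · exact .inl ⟨rfl, by simpa using hlast⟩
  · exact .inr ⟨by simp, rfl, by simpa using hlast, hchain⟩

theorem anc.of_edge (h : E j i) : anc E j i := ⟨_, .pair h⟩

theorem anc.tail (h : anc E j l) (hlm : E l m) : anc E j m :=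
  let ⟨_, hp⟩ := h; ⟨_, hp.snoc hlm⟩

theorem Acyclic.ne_of_anc (hE : Acyclic E) (h : anc E j i) : j ≠ i := by
  rintro rfl
  exact hE j h

theorem Acyclic.ne_of_edge (hE : Acyclic E) (h : E j i) : j ≠ i :=
  hE.ne_of_anc (.of_edge h)

end Paths

section Weights

variable (c : Fin d → Fin d → ℝ≥0)

noncomputable def edgeProd (p : List (Fin d)) : ℝ≥0 :=
  ((p.zip p.tail).map fun q => c q.1 q.2).prod

theorem pathWeight_eq (j : Fin d) (p : List (Fin d)) : pathWeight c j p = c j j * edgeProd c p :=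
  rfl

theorem edgeProd_pair (a m : Fin d) : edgeProd c [a, m] = c a m := by
  simp [edgeProd]

theorem edgeProd_cons_cons (a m : Fin d) (t : List (Fin d)) :
    edgeProd c (a :: m :: t) = c a m * edgeProd c (m :: t) := by
  simp [edgeProd]

theorem edgeProd_snoc {l : Fin d} (m : Fin d) :
    ∀ {p : List (Fin d)}, p.getLast? = some l → edgeProd c (p ++ [m]) = edgeProd c p * c l m
  | [], h => by simp at h
  | [a], h => by
    obtain rfl : a = l := by simpa using h
    simp [edgeProd]
  | a :: r :: t, h => by
    rw [List.cons_append, List.cons_append, edgeProd_cons_cons, ← List.cons_append,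
      edgeProd_snoc m (by simpa using h), edgeProd_cons_cons, mul_assoc]

end Weights

theorem sup_ite_lt_iff {ι : Type*} [Fintype ι] {P : ι → Prop} [DecidablePred P] {f : ι → ℝ≥0}
    {x : ℝ≥0} (hx : 0 < x) :
    (Finset.univ.sup fun l => if P l then f l else 0) < x ↔ ∀ l, P l → f l < x := by
  rw [Finset.sup_lt_iff hx]
  refine ⟨fun h l hl => by simpa [hl] using h l (Finset.mem_univ l), fun h l _ => ?_⟩
  split_ifs with hl
  exacts [h l hl, hx]

namespace IsMLMatrix

variable {E : Fin d → Fin d → Prop} {c b : Fin d → Fin d → ℝ≥0} (hb : IsMLMatrix E c b)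
include hb

theorem diag (i : Fin d) : b i i = c i i := hb.1 i

theorem pathWeight_le {j i : Fin d} {p : List (Fin d)} (hp : PathFrom E j i p) :
    pathWeight c j p ≤ b j i :=
  hb.2.2.1 j i p hp

theorem exists_pathWeight_eq {j i : Fin d} (h : anc E j i) :
    ∃ p, PathFrom E j i p ∧ pathWeight c j p = b j i :=
  hb.2.2.2 j i h

theorem anc_of_ne_zero {j i : Fin d} (hji : j ≠ i) (h : b j i ≠ 0) : anc E j i :=
  not_not.mp fun hn => h (hb.2.1 j i hji hn)

theorem mul_le_of_edge_s10 {l m : Fin d} (hlm : E l m) (j : Fin d) : b j l * c l m ≤ b j m := by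
  rcases eq_or_ne j l with rfl | hjl
  · simpa [pathWeight_eq, edgeProd_pair, hb.diag] using hb.pathWeight_le (.pair hlm)
  rcases eq_or_ne (b j l) 0 with h0 | h0
  · simp [h0]
  obtain ⟨p, hp, hw⟩ := hb.exists_pathWeight_eq (hb.anc_of_ne_zero hjl h0)
  calc b j l * c l m = pathWeight c j (p ++ [m]) := by
        rw [← hw, pathWeight_eq, pathWeight_eq, edgeProd_snoc c m hp.2.2.1, mul_assoc]
    _ ≤ b j m := hb.pathWeight_le (hp.snoc hlm)

theorem mul_edgeProd_le_mul_div (hcd : ∀ i, 0 < c i i) {l i : Fin d} {q : List (Fin d)}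
    (hq : PathFrom E l i q) (k : Fin d) : b k l * edgeProd c q ≤ b k l * b l i / b l l := by
  rw [le_div_iff₀ (hb.diag l ▸ hcd l)]
  calc b k l * edgeProd c q * b l l = b k l * pathWeight c l q := by
        rw [pathWeight_eq, hb.diag]; ring
    _ ≤ b k l * b l i := by gcongr; exact hb.pathWeight_le hq

theorem exists_parent_mul_le {k l i : Fin d} {q : List (Fin d)} (hkl : anc E k l)
    (hq : PathFrom E l i q) :
    ∃ l', anc E k l' ∧ E l' i ∧ b k l * edgeProd c q ≤ b k l' * c l' i := by
  obtain ⟨m, t, rfl, hlm, ⟨rfl, rfl⟩ | hmt⟩ := hq.exists_cons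
  · exact ⟨l, hkl, hlm, by rw [edgeProd_pair]⟩
  obtain ⟨l', hkl', hl'i, hbound⟩ := exists_parent_mul_le (hkl.tail hlm) hmt
  refine ⟨l', hkl', hl'i, ?_⟩
  calc b k l * edgeProd c (l :: m :: t) = b k l * c l m * edgeProd c (m :: t) := by
        rw [edgeProd_cons_cons, mul_assoc]
    _ ≤ b k m * edgeProd c (m :: t) := by gcongr; exact hb.mul_le_of_edge_s10 hlm k
    _ ≤ b k l' * c l' i := hbound
termination_by q.length
decreasing_by subst_vars; simp

theorem mul_div_lt_of_sup_lt (hcd : ∀ i, 0 < c i i) {k l i : Fin d}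
    (hsup : (Finset.univ.sup fun l =>
      if anc E k l ∧ E l i then b k l * b l i / b l l else 0) < b k i)
    (hli : l ≠ i) (hlk : l ≠ k) : b k l * b l i / b l l < b k i := by
  have hpos : 0 < b k i := pos_of_gt hsup
  rcases eq_or_ne (b k l) 0 with h0 | hkl
  · simpa [h0] using hpos
  rcases eq_or_ne (b l i) 0 with h0 | hli'
  · simpa [h0] using hpos
  obtain ⟨q, hq, hw⟩ := hb.exists_pathWeight_eq (hb.anc_of_ne_zero hli hli')
  obtain ⟨l', hkl', hl'i, hbound⟩ := hb.exists_parent_mul_le (hb.anc_of_ne_zero hlk.symm hkl) hq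
  calc b k l * b l i / b l l = b k l * edgeProd c q := by
        rw [← hw, pathWeight_eq, ← hb.diag l, mul_left_comm,
          mul_div_cancel_left₀ _ (hb.diag l ▸ hcd l).ne']
    _ ≤ b k l' * c l' i := hbound
    _ ≤ b k l' * b l' i / b l' l' := by
        simpa [edgeProd_pair] using hb.mul_edgeProd_le_mul_div hcd (.pair hl'i) k
    _ < b k i := (sup_ite_lt_iff hpos).1 hsup l' ⟨hkl', hl'i⟩

theorem edge_of_sup_lt (hE : Acyclic E) (hcd : ∀ i, 0 < c i i) {k i : Fin d} (hki : k ≠ i)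
    (hsup : (Finset.univ.sup fun l =>
      if l ≠ i ∧ l ≠ k then b k l * b l i / b l l else 0) < b k i) : E k i := by
  have hpos : 0 < b k i := pos_of_gt hsup
  obtain ⟨p, hp, hw⟩ := hb.exists_pathWeight_eq (hb.anc_of_ne_zero hki hpos.ne')
  obtain ⟨m, t, rfl, hkm, ⟨rfl, rfl⟩ | hmi⟩ := hp.exists_cons
  · exact hkm
  have hb_le : b k i ≤ b k m * b m i / b m m := calc
    b k i = b k k * c k m * edgeProd c (m :: t) := by
        rw [← hw, pathWeight_eq, edgeProd_cons_cons, hb.diag, mul_assoc]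
    _ ≤ b k m * edgeProd c (m :: t) := by gcongr; exact hb.mul_le_of_edge_s10 hkm k
    _ ≤ b k m * b m i / b m m := hb.mul_edgeProd_le_mul_div hcd hmi k
  have hm : m ≠ i ∧ m ≠ k := ⟨hE.ne_of_anc ⟨_, hmi⟩, (hE.ne_of_edge hkm).symm⟩
  exact absurd ((sup_ite_lt_iff hpos).1 hsup m hm) hb_le.not_gt

end IsMLMatrix

theorem stmt10_general {d : ℕ} (E : Fin d → Fin d → Prop) (hE : Acyclic E)
    (c : Fin d → Fin d → ℝ≥0) (hcd : ∀ i, 0 < c i i)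
    (b : Fin d → Fin d → ℝ≥0) (hb : IsMLMatrix E c b) :
    let edgeB : Fin d → Fin d → Prop := fun k i => E k i ∧
      (Finset.univ.sup fun l =>
        if anc E k l ∧ E l i then b k l * b l i / b l l else 0) < b k i
    ∀ k i : Fin d, edgeB k i ↔ (k ≠ i ∧
      (Finset.univ.sup fun l =>
        if l ≠ i ∧ l ≠ k then b k l * b l i / b l l else 0) < b k i) := by
  intro edgeB k i
  constructor
  · rintro ⟨hki, hsup⟩
    refine ⟨hE.ne_of_edge hki, (sup_ite_lt_iff (pos_of_gt hsup)).2 fun l hl => ?_⟩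
    exact hb.mul_div_lt_of_sup_lt hcd hsup hl.1 hl.2
  · rintro ⟨hki, hsup⟩
    refine ⟨hb.edge_of_sup_lt hE hcd hki hsup, (sup_ite_lt_iff (pos_of_gt hsup)).2 fun l hl => ?_⟩
    exact (sup_ite_lt_iff (pos_of_gt hsup)).1 hsup l
      ⟨hE.ne_of_edge hl.2, (hE.ne_of_anc hl.1).symm⟩

/-- The edge set `E^B` of the minimum max-linear DAG `𝒟^B` satisfies
`E^B = {(k,i) : k ≠ i ∧ b k i > max_{l ≠ i, l ≠ k} b k l * b l i / b l l}`; in particular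
`𝒟^B` is identifiable from `B` alone, without knowledge of `𝒟`. -/
theorem stmt10 {d : ℕ} (hd : 1 ≤ d) (E : Fin d → Fin d → Prop) (hE : Acyclic E)
    (c : Fin d → Fin d → ℝ≥0) (hcd : ∀ i, 0 < c i i) (hce : ∀ k i, E k i → 0 < c k i)
    (b : Fin d → Fin d → ℝ≥0) (hb : IsMLMatrix E c b) :
    let edgeB : Fin d → Fin d → Prop := fun k i => E k i ∧
      (Finset.univ.sup fun l =>
        if anc E k l ∧ E l i then b k l * b l i / b l l else 0) < b k i
    ∀ k i : Fin d, edgeB k i ↔ (k ≠ i ∧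
      (Finset.univ.sup fun l =>
        if l ≠ i ∧ l ≠ k then b k l * b l i / b l l else 0) < b k i) :=
  stmt10_general E hE c hcd b hb
end MaxLinearDAG
end
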